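/- (2FleeSIR on the Diamond network with a treated node increases extent.) In the Diamond network (nodes a,b,c,d,e,f with edges a–b, a–c, b–d, b–e, b–f, c–d, c–e, c–f, all undirected), consider the 2FleeSIR epidemic starting at I_0 = {a}, removal probability 0, and transmission probability τ = 1 on all edges. Without intervention, the final extent is 3 (nodes a, b, c; nodes d, e, f distance themselves upon observing two infected neighbors). If node c is made immune (it can never be infected), then d, e, f never observe two infected neighbors and never distance, so all of a, b, d, e, f become infected, giving final extent 5 > 3. Hence treating a node can strictly increase the number of infectees. -/

import Mathlib

open Finset

/-- A full assignment of random coins for the epidemic: initial-infection coins,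
removal coins, and per-(ordered-)edge transmission coins. -/
abbrev Coins (V : Type*) := (V → Bool) × (V → Bool) × (V → V → Bool)

variable {V : Type*} [Fintype V] [DecidableEq V]

/-- Probability weight of a coin outcome `ω` under induction probabilities `σ`,
removal probabilities `γ` and transmission probabilities `τ`. -/
def coinWeight (σ γ : V → ℝ) (τ : V → V → ℝ) (ω : Coins V) : ℝ :=
  (∏ v, if ω.1 v then σ v else 1 - σ v) *
  (∏ v, if ω.2.1 v then γ v else 1 - γ v) *
  ∏ u, ∏ v, if ω.2.2 u v then τ u v else 1 - τ u v

/-- One step of the discrete-time SIR process: state is `(I, R)`.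
An infected node, unless removed (removal coin `true`), transmits to each
susceptible out-neighbour whose transmission coin is `true`; then it recovers. -/
def sirStep (A : V → V → Bool) (ω : Coins V) (p : Finset V × Finset V) :
    Finset V × Finset V :=
  (univ.filter (fun v => v ∉ p.1 ∧ v ∉ p.2 ∧
      ∃ u ∈ p.1, ω.2.1 u = false ∧ A u v = true ∧ ω.2.2 u v = true),
   p.2 ∪ p.1)

/-- The discrete-time SIR process `(I_t, R_t)`; susceptibles are the complement. -/
def sirProc (A : V → V → Bool) (ω : Coins V) : ℕ → Finset V × Finset V
  | 0 => (univ.filter (fun v => ω.1 v = true), ∅)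
  | t + 1 => sirStep A ω (sirProc A ω t)

/-- The set of ever-infected nodes (the epidemic is stationary by time `n = |V|`). -/
def everInf (A : V → V → Bool) (ω : Coins V) : Finset V :=
  (sirProc A ω (Fintype.card V)).1 ∪ (sirProc A ω (Fintype.card V)).2

/-- The mean final extent `E(|R_n|)` of the SIR epidemic. -/
def meanExtent (A : V → V → Bool) (σ γ : V → ℝ) (τ : V → V → ℝ) : ℝ :=
  ∑ ω : Coins V, coinWeight σ γ τ ω * ((everInf A ω).card : ℝ)

/-- The probability that node `u` is ultimately infected. -/
def probInf (A : V → V → Bool) (σ γ : V → ℝ) (τ : V → V → ℝ) (u : V) : ℝ :=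
  ∑ ω : Coins V, coinWeight σ γ τ ω * (if u ∈ everInf A ω then 1 else 0)

variable {V : Type*} [Fintype V] [DecidableEq V]

/-- One step of 2FleeSIR: the state is `(I, R, Sev)`, where `Sev` is the set of
nodes that have (permanently) severed all their ties.  First (step 0) every
susceptible node observing at least `2` infected in-neighbours severs all its ties;
then infected nodes transmit as in SIR, except that no transmission can reach a
severed node; then infected nodes recover. -/
def fleeStep (A : V → V → Bool) (ω : Coins V) (p : Finset V × Finset V × Finset V) :
    Finset V × Finset V × Finset V :=
  let Sev : Finset V := p.2.2 ∪ Finset.univ.filter (fun v => v ∉ p.1 ∧ v ∉ p.2.1 ∧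
      2 ≤ (Finset.univ.filter (fun u => A u v = true ∧ u ∈ p.1)).card)
  (Finset.univ.filter (fun v => v ∉ p.1 ∧ v ∉ p.2.1 ∧ v ∉ Sev ∧
      ∃ u ∈ p.1, ω.2.1 u = false ∧ A u v = true ∧ ω.2.2 u v = true),
   p.2.1 ∪ p.1, Sev)

/-- The 2FleeSIR process `(I_t, R_t, Sev_t)`. -/
def fleeProc (A : V → V → Bool) (ω : Coins V) : ℕ → Finset V × Finset V × Finset V
  | 0 => (Finset.univ.filter (fun v => ω.1 v = true), ∅, ∅)
  | t + 1 => fleeStep A ω (fleeProc A ω t)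

/-- The ever-infected set of the 2FleeSIR epidemic. -/
def everFlee (A : V → V → Bool) (ω : Coins V) : Finset V :=
  (fleeProc A ω (Fintype.card V)).1 ∪ (fleeProc A ω (Fintype.card V)).2.1

/-- The mean final extent of the 2FleeSIR epidemic. -/
def fleeMeanExtent (A : V → V → Bool) (σ γ : V → ℝ) (τ : V → V → ℝ) : ℝ :=
  ∑ ω : Coins V, coinWeight σ γ τ ω * ((everFlee A ω).card : ℝ)

/-- The six nodes of the Diamond network. -/
inductive Dia | a | b | c | d | e | f
deriving DecidableEq

instance : Fintype Dia :=
  ⟨{Dia.a, Dia.b, Dia.c, Dia.d, Dia.e, Dia.f}, fun x => by cases x <;> simp⟩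

/-- The Diamond network (undirected, encoded as a symmetric directed graph):
edges `a–b`, `a–c`, `b–d`, `b–e`, `b–f`, `c–d`, `c–e`, `c–f`. -/
def diaAdj : Dia → Dia → Bool := fun x y =>
  decide ((x, y) ∈ ([(.a,.b),(.b,.a),(.a,.c),(.c,.a),(.b,.d),(.d,.b),(.b,.e),(.e,.b),
    (.b,.f),(.f,.b),(.c,.d),(.d,.c),(.c,.e),(.e,.c),(.c,.f),(.f,.c)] : List (Dia × Dia)))

/-- 2FleeSIR step with a set `Imm` of immune (treated) nodes, which can never be
infected. -/
def fleeStepImm (A : Dia → Dia → Bool) (Imm : Finset Dia) (ω : Coins Dia)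
    (p : Finset Dia × Finset Dia × Finset Dia) :
    Finset Dia × Finset Dia × Finset Dia :=
  let Sev : Finset Dia := p.2.2 ∪ Finset.univ.filter (fun v => v ∉ p.1 ∧ v ∉ p.2.1 ∧
      2 ≤ (Finset.univ.filter (fun u => A u v = true ∧ u ∈ p.1)).card)
  (Finset.univ.filter (fun v => v ∉ Imm ∧ v ∉ p.1 ∧ v ∉ p.2.1 ∧ v ∉ Sev ∧
      ∃ u ∈ p.1, ω.2.1 u = false ∧ A u v = true ∧ ω.2.2 u v = true),
   p.2.1 ∪ p.1, Sev)

def fleeProcImm (A : Dia → Dia → Bool) (Imm : Finset Dia) (ω : Coins Dia) :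
    ℕ → Finset Dia × Finset Dia × Finset Dia
  | 0 => (Finset.univ.filter (fun v => ω.1 v = true), ∅, ∅)
  | t + 1 => fleeStepImm A Imm ω (fleeProcImm A Imm ω t)

/-- The ever-infected set of 2FleeSIR with immune set `Imm` (treated nodes count as
uninfected). -/
def everFleeImm (A : Dia → Dia → Bool) (Imm : Finset Dia) (ω : Coins Dia) : Finset Dia :=
  (fleeProcImm A Imm ω 6).1 ∪ (fleeProcImm A Imm ω 6).2.1

/-- **treating a node can increase the 2FleeSIR extent.** On the
Diamond network with `I₀ = {a}`, `γ ≡ 0` and `τ ≡ 1`: without intervention the final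
extent is `3` (exactly `a, b, c` get infected; `d, e, f` distance themselves), but if
node `c` is made immune then `d, e, f` never distance and exactly `a, b, d, e, f`
(five nodes) become infected — strictly more than before. -/
theorem flee_treatment_increases_extent :
    ∀ ω : Coins Dia, ω.1 = (fun v => decide (v = Dia.a)) →
      ω.2.1 = (fun _ => false) → ω.2.2 = (fun _ _ => true) →
    everFleeImm diaAdj ∅ ω = {Dia.a, Dia.b, Dia.c} ∧
    everFleeImm diaAdj {Dia.c} ω = {Dia.a, Dia.b, Dia.d, Dia.e, Dia.f} ∧
    (everFleeImm diaAdj ∅ ω).card < (everFleeImm diaAdj {Dia.c} ω).card := by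
  rintro ⟨w1, w2, w3⟩ h1 h2 h3
  simp only at h1 h2 h3
  subst h1 h2 h3
  refine ⟨by decide, by decide, by decide⟩
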